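/- Let g' ≥ 2 be an integer, r a positive integer and d' an integer with gcd(r,d') = 1. Define F(t) = (1−t) · P^{ℍ,od}_{g'}(r,d')(t) for real t > 0 with t ≠ 1. Then for all such t one has t^{r²(2g'−2)+1} · F(1/t) = F(t). -/

import Mathlib

/-!
Replacing `t` by `t⁻¹` in the summand of a composition `(r₁,…,r_l)` gives, up to the factor
`-t^{-(2g'-2)r²}`, the summand of the reversed composition `(r_l,…,r₁)`. Since
`1 - t⁻ᵏ = -t⁻ᵏ (1 - tᵏ)`, each block factor picks up `-t^{-(2g'-2)rᵢ²}` and the adjacent product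
picks up `(-1)^{l-1} t^{-2Σ(rᵢ+rᵢ₊₁)}`. The latter monomial is compensated by
`⟨(r₁+⋯+rᵢ)d'/r⟩ + ⟨(rᵢ₊₁+⋯+r_l)d'/r⟩ = 1`, which holds because coprimality keeps the partial
sums `(r₁+⋯+rᵢ)d'/r` off `ℤ`, and the block monomials combine through
`2 Σ_{i<j} rᵢ rⱼ + Σ rᵢ² = r²`. Summing over compositions, `P(t⁻¹) = -t^{-(2g'-2)r²} P(t)`, and
`1 - t⁻¹ = -t⁻¹ (1 - t)` finishes the proof.
-/

open Finset

noncomputable section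

/-- `ang x` is `⟨x⟩ = ⌊x⌋ + 1 - x`, the unique element of `(0,1]` with `x + ⟨x⟩ ∈ ℤ`. -/
def ang (x : ℝ) : ℝ := (⌊x⌋ : ℝ) + 1 - x

/-- `M(r₁,…,r_l; λ) = Σ_{i=1}^{l-1} (r_i + r_{i+1}) · ⟨(r₁+⋯+r_i)·λ⟩` for `L = [r₁,…,r_l]`. -/
def Mfun (L : List ℕ) (lam : ℝ) : ℝ :=
  ∑ i ∈ Finset.range (L.length - 1),
    ((L.getD i 0 : ℝ) + (L.getD (i+1) 0 : ℝ)) * ang (((L.take (i+1)).sum : ℝ) * lam)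

/-- `∏_{i=1}^{l-1} (1 - x^{m·(r_i + r_{i+1})})`. -/
def adjProd (x : ℝ) (m : ℕ) (L : List ℕ) : ℝ :=
  ∏ i ∈ Finset.range (L.length - 1), (1 - x ^ (m * (L.getD i 0 + L.getD (i+1) 0)))

/-- `Σ_{1 ≤ i < j ≤ l} r_i r_j`. -/
def pairSum (L : List ℕ) : ℝ :=
  ∑ i ∈ Finset.range L.length, ∑ j ∈ Finset.Ico (i+1) L.length,
    (L.getD i 0 : ℝ) * (L.getD j 0 : ℝ)

/-- The block factor `∏_{j=1}^{rᵢ}(1+t^{2j-1})^{2g'} / (∏_{j=1}^{rᵢ-1}(1-t^{2j}) ∏_{j=1}^{rᵢ}(1-t^{2j}))`. -/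
def blockHod (g' : ℕ) (t : ℝ) (ri : ℕ) : ℝ :=
  (∏ j ∈ Finset.range ri, (1 + t ^ (2*j+1)) ^ (2*g')) /
  ((∏ j ∈ Finset.range (ri - 1), (1 - t ^ (2*j+2))) * ∏ j ∈ Finset.range ri, (1 - t ^ (2*j+2)))

/-- The closed formula `P^{ℍ,od}_{g'}(r,d)(t)` (quaternionic, odd genus `2g'-1`, no real points). -/
def PHod (g' r : ℕ) (d : ℤ) (t : ℝ) : ℝ :=
  ∑ c : Composition r,
    (-1 : ℝ) ^ (c.length - 1) *
    (t ^ (2 * Mfun c.blocks ((d : ℝ) / (r : ℝ))) / adjProd t 2 c.blocks) *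
    t ^ ((2 * (g' : ℝ) - 2) * pairSum c.blocks) *
    (c.blocks.map (blockHod g' t)).prod


lemma ang_eq_one_sub_fract (x : ℝ) : ang x = 1 - Int.fract x := by
  rw [ang, ← Int.self_sub_floor]
  ring

lemma ang_intCast_sub (n : ℤ) {x : ℝ} (hx : Int.fract x ≠ 0) : ang (n - x) = 1 - ang x := by
  rw [ang_eq_one_sub_fract, ang_eq_one_sub_fract, show (n : ℝ) - x = -x + n by ring,
    Int.fract_add_intCast, Int.fract_neg hx]

lemma fract_natCast_mul_div_eq_zero_iff {r : ℕ} (hr : r ≠ 0) (s : ℕ) (d : ℤ) :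
    Int.fract ((s : ℝ) * (d / r)) = 0 ↔ (r : ℤ) ∣ s * d := by
  rw [← mul_div_assoc, show (s : ℝ) * d = ((s * d : ℤ) : ℝ) by push_cast; ring,
    Int.fract_div_intCast_eq_div_intCast_mod, div_eq_zero_iff, Int.cast_eq_zero,
    Int.dvd_iff_emod_eq_zero]
  simp [hr]

lemma prod_one_add_inv_pow {K ι : Type*} [Field K] (s : Finset ι) (k : ι → ℕ) {t : K}
    (ht : t ≠ 0) : ∏ i ∈ s, (1 + t⁻¹ ^ k i) = t⁻¹ ^ (∑ i ∈ s, k i) * ∏ i ∈ s, (1 + t ^ k i) := by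
  rw [← prod_pow_eq_pow_sum, ← prod_mul_distrib]
  refine prod_congr rfl fun i _ => ?_
  rw [mul_add, mul_one, ← mul_pow, inv_mul_cancel₀ ht, one_pow, add_comm]

lemma prod_one_sub_inv_pow {K ι : Type*} [Field K] (s : Finset ι) (k : ι → ℕ) {t : K}
    (ht : t ≠ 0) :
    ∏ i ∈ s, (1 - t⁻¹ ^ k i) = (-1) ^ #s * t⁻¹ ^ (∑ i ∈ s, k i) * ∏ i ∈ s, (1 - t ^ k i) := by
  rw [← prod_const, ← prod_pow_eq_pow_sum, ← prod_mul_distrib, ← prod_mul_distrib]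
  refine prod_congr rfl fun i _ => ?_
  rw [mul_sub, mul_one, mul_assoc, ← mul_pow, inv_mul_cancel₀ ht, one_pow]
  ring

lemma sum_range_two_mul_add_one (n : ℕ) : ∑ j ∈ range n, (2 * j + 1) = n ^ 2 := by
  induction n with
  | zero => simp
  | succ n ih => rw [sum_range_succ, ih]; ring

lemma sum_range_two_mul_add_two (n : ℕ) : ∑ j ∈ range n, (2 * j + 2) = n ^ 2 + n := by
  induction n with
  | zero => simp
  | succ n ih => rw [sum_range_succ, ih]; ring

lemma blockHod_inv (g' : ℕ) {t : ℝ} (ht : t ≠ 0) {n : ℕ} (hn : 0 < n) :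
    blockHod g' t⁻¹ n = -(t ^ (2 * n ^ 2) / t ^ (2 * g' * n ^ 2)) * blockHod g' t n := by
  obtain ⟨k, rfl⟩ := Nat.exists_eq_add_one.mpr hn
  have hsign : (-1 : ℝ) ^ k * (-1) ^ (k + 1) = -1 := by
    rw [← pow_add, show k + (k + 1) = 2 * k + 1 by ring, pow_succ, pow_mul, neg_one_sq, one_pow,
      one_mul]
  have hscalar : (t⁻¹ ^ (k + 1) ^ 2) ^ (2 * g') /
      ((-1) ^ k * t⁻¹ ^ (k ^ 2 + k) * ((-1) ^ (k + 1) * t⁻¹ ^ ((k + 1) ^ 2 + (k + 1)))) =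
      -(t ^ (2 * (k + 1) ^ 2) / t ^ (2 * g' * (k + 1) ^ 2)) := by
    rw [mul_mul_mul_comm, hsign, ← pow_add, ← pow_mul,
      show k ^ 2 + k + ((k + 1) ^ 2 + (k + 1)) = 2 * (k + 1) ^ 2 by ring, inv_pow, inv_pow]
    field_simp
    ring
  rw [blockHod, blockHod, prod_pow, prod_pow, prod_one_add_inv_pow _ _ ht,
    prod_one_sub_inv_pow _ _ ht, prod_one_sub_inv_pow _ _ ht, sum_range_two_mul_add_one,
    sum_range_two_mul_add_two, sum_range_two_mul_add_two, card_range, card_range,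
    Nat.add_sub_cancel, ← hscalar]
  ring

lemma prod_map_blockHod_inv (g' : ℕ) {t : ℝ} (ht : t ≠ 0) {L : List ℕ} (hL : ∀ n ∈ L, 0 < n) :
    (L.map (blockHod g' t⁻¹)).prod =
      (-1) ^ L.length * (t ^ (2 * (L.map (· ^ 2)).sum) / t ^ (2 * g' * (L.map (· ^ 2)).sum)) *
        (L.map (blockHod g' t)).prod := by
  induction L with
  | nil => simp
  | cons n L ih =>
    simp only [List.map_cons, List.prod_cons, List.sum_cons, List.length_cons,
      blockHod_inv g' ht (hL n List.mem_cons_self), ih fun m hm => hL m (List.mem_cons_of_mem n hm)]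
    ring

def adjSum (L : List ℕ) : ℕ :=
  ∑ i ∈ range (L.length - 1), (L.getD i 0 + L.getD (i + 1) 0)

lemma adjProd_inv {t : ℝ} (ht : t ≠ 0) (m : ℕ) (L : List ℕ) :
    adjProd t⁻¹ m L = (-1) ^ (L.length - 1) * t⁻¹ ^ (m * adjSum L) * adjProd t m L := by
  rw [adjProd, adjProd, prod_one_sub_inv_pow _ _ ht, card_range, adjSum, mul_sum]

lemma adjacent_reverse_reflect {α : Type*} (L : List ℕ) (f : ℕ → ℕ → ℕ → α) :
    Set.EqOn
      (fun i => f (L.reverse.getD (L.length - 1 - 1 - i) 0)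
        (L.reverse.getD (L.length - 1 - 1 - i + 1) 0)
        (L.reverse.take (L.length - 1 - 1 - i + 1)).sum)
      (fun i => f (L.getD (i + 1) 0) (L.getD i 0) (L.drop (i + 1)).sum)
      (range (L.length - 1)) := by
  intro i hi
  have hi : i < L.length - 1 := mem_range.mp hi
  dsimp only
  rw [List.getD_reverse _ (by omega), List.getD_reverse _ (by omega), List.take_reverse,
    List.sum_reverse, show L.length - 1 - (L.length - 1 - 1 - i) = i + 1 by omega,
    show L.length - 1 - (L.length - 1 - 1 - i + 1) = i by omega,
    show L.length - (L.length - 1 - 1 - i + 1) = i + 1 by omega]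

lemma adjProd_reverse (x : ℝ) (m : ℕ) (L : List ℕ) : adjProd x m L.reverse = adjProd x m L := by
  rw [adjProd, adjProd, List.length_reverse, ← prod_range_reflect]
  refine prod_congr rfl fun i hi => ?_
  have h := adjacent_reverse_reflect L (fun a b _ => 1 - x ^ (m * (a + b))) hi
  dsimp only at h
  rw [h, add_comm]

lemma Mfun_reverse_add {L : List ℕ} {lam : ℝ} {n : ℤ} (hn : (L.sum : ℝ) * lam = n)
    (hfract : ∀ i < L.length - 1, Int.fract ((L.take (i + 1)).sum * lam) ≠ 0) :
    Mfun L.reverse lam + Mfun L lam = adjSum L := by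
  rw [Mfun, Mfun, List.length_reverse, ← sum_range_reflect, ← sum_add_distrib, adjSum,
    Nat.cast_sum]
  refine sum_congr rfl fun i hi => ?_
  have h := adjacent_reverse_reflect L (fun a b s => ((a : ℝ) + b) * ang (s * lam)) hi
  dsimp only at h
  rw [h]
  have hdrop : ((L.drop (i + 1)).sum : ℝ) * lam = n - (L.take (i + 1)).sum * lam := by
    rw [← hn, ← L.sum_take_add_sum_drop (i + 1)]
    push_cast
    ring
  rw [hdrop, ang_intCast_sub n (hfract i (mem_range.mp hi))]
  push_cast
  ring

lemma sum_range_getD (L : List ℕ) : ∑ i ∈ range L.length, (L.getD i 0 : ℝ) = L.sum := by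
  induction L with
  | nil => simp
  | cons a L ih =>
    simp only [List.length_cons, sum_range_succ', List.getD_cons_succ, List.getD_cons_zero, ih,
      List.sum_cons]
    push_cast
    ring

lemma pairSum_cons (a : ℕ) (L : List ℕ) : pairSum (a :: L) = a * L.sum + pairSum L := by
  rw [pairSum, pairSum, List.length_cons, sum_range_succ', add_comm]
  congr 1
  · rw [← sum_Ico_add' _ 0 L.length 1]
    simp only [List.getD_cons_succ, List.getD_cons_zero, ← mul_sum, Nat.Ico_zero_eq_range,
      sum_range_getD]
  · refine sum_congr rfl fun i _ => ?_
    rw [← sum_Ico_add']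
    simp only [List.getD_cons_succ]

lemma two_mul_pairSum_add_sum_sq (L : List ℕ) :
    2 * pairSum L + ((L.map (· ^ 2)).sum : ℕ) = (L.sum : ℝ) ^ 2 := by
  induction L with
  | nil => simp [pairSum]
  | cons a L ih =>
    rw [pairSum_cons]
    simp only [List.map_cons, List.sum_cons]
    push_cast at ih ⊢
    linear_combination ih

lemma pairSum_reverse (L : List ℕ) : pairSum L.reverse = pairSum L := by
  have h := two_mul_pairSum_add_sum_sq L.reverse
  rw [List.sum_reverse, List.map_reverse, List.sum_reverse, ← two_mul_pairSum_add_sum_sq L] at h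
  linarith

lemma Composition.fract_sizeUpTo_mul_ne_zero {r : ℕ} (c : Composition r) {d : ℤ}
    (hcop : Int.gcd r d = 1) {i : ℕ} (hi0 : 0 < i) (hi : i < c.length) :
    Int.fract (c.sizeUpTo i * (d / r : ℝ)) ≠ 0 := by
  have hpos : 0 < c.sizeUpTo i := calc
    0 = c.sizeUpTo 0 := c.sizeUpTo_zero.symm
    _ < c.sizeUpTo 1 := c.sizeUpTo_strict_mono (hi0.trans hi)
    _ ≤ c.sizeUpTo i := c.monotone_sizeUpTo hi0
  have hlt : c.sizeUpTo i < r := (c.sizeUpTo_strict_mono hi).trans_le (c.sizeUpTo_le _)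
  rw [Ne, fract_natCast_mul_div_eq_zero_iff (by omega)]
  intro hdvd
  have hdvd' := (Int.isCoprime_iff_gcd_eq_one.mpr hcop).dvd_of_dvd_mul_right hdvd
  have := Int.le_of_dvd (by exact_mod_cast hpos) hdvd'
  omega

lemma Composition.Mfun_reverse_add_of_coprime {r : ℕ} (hr : r ≠ 0) (c : Composition r) {d : ℤ}
    (hcop : Int.gcd r d = 1) :
    Mfun c.blocks.reverse (d / r) + Mfun c.blocks (d / r) = adjSum c.blocks := by
  refine Mfun_reverse_add (n := d) ?_ fun i hi =>
    c.fract_sizeUpTo_mul_ne_zero hcop i.succ_pos (by rw [Composition.length]; omega)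
  rw [c.blocks_sum]
  field_simp

def PHodTerm (g' : ℕ) (lam t : ℝ) (L : List ℕ) : ℝ :=
  (-1 : ℝ) ^ (L.length - 1) * (t ^ (2 * Mfun L lam) / adjProd t 2 L) *
    t ^ ((2 * (g' : ℝ) - 2) * pairSum L) * (L.map (blockHod g' t)).prod

lemma PHod_eq_sum (g' r : ℕ) (d : ℤ) (t : ℝ) :
    PHod g' r d t = ∑ c : Composition r, PHodTerm g' (d / r) t c.blocks := rfl

lemma PHodTerm_inv (g' : ℕ) {r : ℕ} (hr : 0 < r) (c : Composition r) {d : ℤ}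
    (hcop : Int.gcd r d = 1) {t : ℝ} (ht : 0 < t) :
    PHodTerm g' (d / r) t⁻¹ c.blocks =
      -t ^ (-((2 * g' - 2) * r ^ 2 : ℝ)) * PHodTerm g' (d / r) t c.reverse.blocks := by
  have hMfun : t⁻¹ ^ (2 * Mfun c.blocks (d / r)) =
      t ^ (2 * Mfun c.blocks.reverse (d / r)) * (t ^ (2 * adjSum c.blocks))⁻¹ := by
    have := c.Mfun_reverse_add_of_coprime hr.ne' hcop
    rw [Real.inv_rpow ht.le, ← Real.rpow_natCast, ← Real.rpow_neg ht.le, ← Real.rpow_neg ht.le,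
      ← Real.rpow_add ht]
    congr 1
    push_cast
    linear_combination (-2) * this
  have hsq := two_mul_pairSum_add_sum_sq c.blocks
  rw [c.blocks_sum] at hsq
  have hexp : t⁻¹ ^ ((2 * g' - 2) * pairSum c.blocks) *
      (t ^ (2 * (c.blocks.map (· ^ 2)).sum) / t ^ (2 * g' * (c.blocks.map (· ^ 2)).sum)) =
      t ^ (-((2 * g' - 2) * r ^ 2 : ℝ)) * t ^ ((2 * g' - 2) * pairSum c.blocks) := by
    rw [Real.inv_rpow ht.le, ← Real.rpow_neg ht.le, ← Real.rpow_natCast t (2 * _),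
      ← Real.rpow_natCast t (2 * g' * _), ← Real.rpow_sub ht, ← Real.rpow_add ht,
      ← Real.rpow_add ht]
    congr 1
    push_cast at hsq ⊢
    linear_combination (2 - 2 * g') * hsq
  have hsign : (-1 : ℝ) ^ c.blocks.length = -(-1) ^ (c.blocks.length - 1) := by
    obtain ⟨k, hk⟩ := Nat.exists_eq_add_one.mpr (c.length_pos_of_pos hr)
    rw [Composition.length] at hk
    rw [hk, pow_succ, Nat.add_sub_cancel]
    ring
  simp only [PHodTerm, Composition.reverse_blocks, List.length_reverse, adjProd_inv ht.ne',
    adjProd_reverse, pairSum_reverse, prod_map_blockHod_inv g' ht.ne' fun n => c.blocks_pos,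
    List.map_reverse, List.prod_reverse, hMfun, hsign, inv_pow]
  -- `adjProd t 2 c.blocks` vanishes at `t = 1`; only nonzero factors are cancelled from here on.
  have hY : t ^ ((2 * g' - 2) * pairSum c.blocks) ≠ 0 := (Real.rpow_pos_of_pos ht _).ne'
  rw [show t ^ (-((2 * g' - 2) * r ^ 2 : ℝ)) = _ from
    (eq_div_of_mul_eq hY hexp.symm)]
  field_simp

lemma PHod_inv (g' : ℕ) {r : ℕ} (hr : 0 < r) {d : ℤ} (hcop : Int.gcd r d = 1) {t : ℝ}
    (ht : 0 < t) : PHod g' r d t⁻¹ = -t ^ (-((2 * g' - 2) * r ^ 2 : ℝ)) * PHod g' r d t := by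
  simp only [PHod_eq_sum, PHodTerm_inv g' hr _ hcop ht, ← mul_sum]
  rw [Composition.reverse_bijective.sum_comp fun c => PHodTerm g' (d / r) t c.blocks]

theorem stmt6_general (g' r : ℕ) (hr : 0 < r)
    (d' : ℤ) (hcop : Int.gcd (r : ℤ) d' = 1)
    (t : ℝ) (ht : 0 < t) :
    t ^ ((r : ℝ)^2 * (2 * (g' : ℝ) - 2) + 1) * ((1 - 1/t) * PHod g' r d' (1/t)) =
      (1 - t) * PHod g' r d' t := by
  have hpow : t ^ ((r : ℝ)^2 * (2 * (g' : ℝ) - 2) + 1) * t ^ (-((2 * g' - 2) * r ^ 2 : ℝ)) = t := by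
    rw [← Real.rpow_add ht, show (r : ℝ)^2 * (2 * (g' : ℝ) - 2) + 1 + -((2 * g' - 2) * r ^ 2) = 1
      by ring, Real.rpow_one]
  rw [one_div, PHod_inv g' hr hcop ht]
  calc _ = -(t ^ ((r : ℝ)^2 * (2 * (g' : ℝ) - 2) + 1) * t ^ (-((2 * g' - 2) * r ^ 2 : ℝ))) *
        (1 - t⁻¹) * PHod g' r d' t := by ring
    _ = (1 - t) * PHod g' r d' t := by
      rw [hpow, neg_mul, mul_sub, mul_inv_cancel₀ ht.ne']
      ring

/-- Strange Poincaré duality for `(1-t)·P^{ℍ,od}_{g'}(r,d')`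
(Theorem `strange_Poincare_duality_no_real_points` (3)). -/
theorem stmt6 (g' r : ℕ) (hg : 2 ≤ g') (hr : 0 < r)
    (d' : ℤ) (hcop : Int.gcd (r : ℤ) d' = 1)
    (t : ℝ) (ht : 0 < t) (ht1 : t ≠ 1) :
    t ^ ((r : ℝ)^2 * (2 * (g' : ℝ) - 2) + 1) * ((1 - 1/t) * PHod g' r d' (1/t)) =
      (1 - t) * PHod g' r d' t :=
  stmt6_general g' r hr d' hcop t ht

end
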